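/- Suppose m = d, B* ∈ ℝ^{d×d} is invertible, and A* ∈ ℝ^{d×d} is entrywise nonnegative, invertible, and is not a scale transformation with respect to any component. Let μ be a probability measure on ℝ^d with full support and let X_1, X_2, … be i.i.d. with law μ. Define Ŝ_n(ω) = {C ∈ ℝ^{d×d} : C·y(X_i(ω)) − X_i(ω) ≥ 0 for all 1 ≤ i ≤ n}. Then for P-almost every ω, every sequence (C_n) with C_n ∈ Ŝ_n(ω) for each n converges to (B*)⁻¹, and consequently C_n is invertible for all sufficiently large n and C_n⁻¹ → B*. -/

import Mathlib

/-!
Testing the constraint `x ≤ C y(x)` at `x = A⁻¹ v` with `v = ±eⱼ`, where the ReLU acts as `0`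
or as the identity, shows that `N = (C B - 1) A⁻¹` is entrywise nonpositive while `N A + N` is
nonnegative off the diagonal. Since `A ≥ 0` has an off-diagonal nonzero entry in every row, this
forces `N = 0`: `B⁻¹` is the only matrix satisfying the constraint at every point.

Almost surely the samples are dense, so by continuity the feasible sets `Ŝₙ` form a decreasing
sequence of closed convex sets with intersection `{B⁻¹}`. In finite dimension such sets shrink to
their intersection: if `Cₙ ∈ Ŝₙ` stayed `ε`-far from `B⁻¹`, convexity would give points of `Ŝₙ` at
distance exactly `ε` from `B⁻¹`, and a limit point of these would lie in every `Ŝₙ`.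
-/

open MeasureTheory Matrix ProbabilityTheory Filter

/-- Entrywise rectifier (ReLU). -/
def relu {k : ℕ} (v : Fin k → ℝ) : Fin k → ℝ := fun i => max (v i) 0

/-- The ground-truth residual unit (square case `m = d`). -/
def resUnit {d : ℕ} (A B : Matrix (Fin d) (Fin d) ℝ) (x : Fin d → ℝ) : Fin d → ℝ :=
  B.mulVec (relu (A.mulVec x) + x)

open Topology

theorem Matrix.eq_zero_of_nonpos_of_offDiag_mul_add_nonneg {n : Type*} [Fintype n]
    {A N : Matrix n n ℝ} (hA : ∀ i j, 0 ≤ A i j) (hA_offDiag : ∀ i, ∃ j ≠ i, A i j ≠ 0)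
    (hN : ∀ i j, N i j ≤ 0) (h : ∀ i j, i ≠ j → 0 ≤ (N * A + N) i j) : N = 0 := by
  have hterm (i k j : n) : N i k * A k j ≤ 0 := mul_nonpos_of_nonpos_of_nonneg (hN i k) (hA k j)
  have hoffDiag : ∀ i j, i ≠ j → (∀ k, N i k * A k j = 0) ∧ N i j = 0 := by
    intro i j hij
    have hsum : ∑ k, N i k * A k j ≤ 0 := Finset.sum_nonpos fun k _ => hterm i k j
    have := h i j hij
    rw [add_apply, mul_apply] at this
    refine ⟨fun k => ?_, by linarith [hN i j]⟩
    exact (Finset.sum_eq_zero_iff_of_nonpos fun k _ => hterm i k j).1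
      (by linarith [hN i j]) k (Finset.mem_univ k)
  ext i j
  by_cases hij : i = j
  · subst hij
    obtain ⟨j, hji, hAij⟩ := hA_offDiag i
    exact (mul_eq_zero.1 ((hoffDiag i j hji.symm).1 i)).resolve_right hAij
  · exact (hoffDiag i j hij).2

theorem convex_setOf_le_mulVec {m n : Type*} [Fintype n] (x : m → ℝ) (v : n → ℝ) :
    Convex ℝ {C : Matrix m n ℝ | x ≤ C *ᵥ v} := by
  intro C hC D hD a b ha hb hab
  calc x = a • x + b • x := by rw [← add_smul, hab, one_smul]
    _ ≤ a • (C *ᵥ v) + b • (D *ᵥ v) :=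
        add_le_add (smul_le_smul_of_nonneg_left hC ha) (smul_le_smul_of_nonneg_left hD hb)
    _ = (a • C + b • D) *ᵥ v := by rw [add_mulVec, smul_mulVec, smul_mulVec]

theorem isClosed_setOf_le_mulVec {m n : Type*} [Fintype n] (x : m → ℝ) (v : n → ℝ) :
    IsClosed {C : Matrix m n ℝ | x ≤ C *ᵥ v} :=
  isClosed_le continuous_const (continuous_id.matrix_mulVec continuous_const)

theorem Filter.Tendsto.matrix_inv {α n K : Type*} [Fintype n] [DecidableEq n] [NormedField K]
    {l : Filter α} {C : α → Matrix n n K}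
    {M : Matrix n n K} (hC : Tendsto C l (𝓝 M)) (hM : IsUnit M.det) :
    (∀ᶠ a in l, IsUnit (C a).det) ∧ Tendsto (fun a => (C a)⁻¹) l (𝓝 M⁻¹) := by
  have hdet : Tendsto (fun a => (C a).det) l (𝓝 M.det) :=
    (continuous_id.matrix_det.tendsto M).comp hC
  refine ⟨(hdet.eventually_ne hM.ne_zero).mono fun _ => IsUnit.mk0 _, ?_⟩
  refine ((continuousAt_matrix_inv M ?_).tendsto).comp hC
  rw [Ring.inverse_eq_inv']
  exact continuousAt_inv₀ hM.ne_zero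

theorem tendsto_of_forall_mem_of_iInter_eq_singleton {E : Type*} [NormedAddCommGroup E]
    [NormedSpace ℝ E] [ProperSpace E] {S : ℕ → Set E} {a : E} (hS : Antitone S)
    (hconv : ∀ n, Convex ℝ (S n)) (hclosed : ∀ n, IsClosed (S n)) (hinter : ⋂ n, S n = {a})
    {c : ℕ → E} (hc : ∀ n, c n ∈ S n) : Tendsto c atTop (𝓝 a) := by
  have ha : ∀ n, a ∈ S n := Set.mem_iInter.1 (hinter ▸ rfl)
  rw [Metric.tendsto_atTop]
  by_contra! hfar
  obtain ⟨ε, hε, hfar⟩ := hfar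
  obtain ⟨φ, hφ, hφfar⟩ := extraction_of_frequently_atTop (frequently_atTop.2 hfar)
  set p : ℕ → E := fun k => a + (ε / dist (c (φ k)) a) • (c (φ k) - a)
  have hp_dist (k : ℕ) : dist (p k) a = ε := by
    have hd : 0 < dist (c (φ k)) a := hε.trans_le (hφfar k)
    rw [dist_eq_norm, add_sub_cancel_left, norm_smul, ← dist_eq_norm,
      Real.norm_of_nonneg (by positivity), div_mul_cancel₀ _ hd.ne']
  have hp_mem (k : ℕ) : p k ∈ S (φ k) := by
    refine (hconv _).add_smul_sub_mem (ha _) (hc _) ⟨by positivity, ?_⟩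
    exact div_le_one_of_le₀ (hφfar k) dist_nonneg
  obtain ⟨q, hq, ψ, hψ, hlim⟩ := (isCompact_sphere a ε).tendsto_subseq hp_dist
  have hq_mem (n : ℕ) : q ∈ S n := by
    refine (hclosed n).mem_of_tendsto hlim ((eventually_ge_atTop n).mono fun k hk => ?_)
    exact hS (hk.trans ((hψ.id_le k).trans (hφ.id_le _))) (hp_mem (ψ k))
  have : q = a := Set.mem_singleton_iff.1 (hinter ▸ Set.mem_iInter.2 hq_mem)
  exact hε.ne (by simpa [this] using hq)

theorem ae_exists_mem_of_iIndepFun {Ω α : Type*} [MeasurableSpace Ω] [MeasurableSpace α]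
    {P : Measure Ω} {μ : Measure α} [IsProbabilityMeasure μ] {X : ℕ → Ω → α}
    (hmeas : ∀ n, Measurable (X n)) (hindep : iIndepFun X P) (hdist : ∀ n, P.map (X n) = μ)
    {U : Set α} (hU : MeasurableSet U) (hμU : μ U ≠ 0) : ∀ᵐ ω ∂P, ∃ i, X i ω ∈ U := by
  have hlt : μ Uᶜ < 1 := by
    rw [prob_compl_eq_one_sub hU]
    exact ENNReal.sub_lt_self ENNReal.one_ne_top one_ne_zero hμU
  have hbound (n : ℕ) : P (⋂ i, X i ⁻¹' Uᶜ) ≤ μ Uᶜ ^ n :=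
    calc P (⋂ i, X i ⁻¹' Uᶜ) ≤ P (⋂ i ∈ Finset.range n, X i ⁻¹' Uᶜ) :=
          measure_mono fun ω hω => Set.mem_iInter₂.2 fun i _ => Set.mem_iInter.1 hω i
      _ = ∏ i ∈ Finset.range n, P (X i ⁻¹' Uᶜ) :=
          hindep.measure_inter_preimage_eq_mul _ fun _ _ => hU.compl
      _ = μ Uᶜ ^ n := by
          rw [Finset.prod_congr rfl fun i _ => (show P (X i ⁻¹' Uᶜ) = μ Uᶜ by
            rw [← hdist i, Measure.map_apply (hmeas i) hU.compl]), Finset.prod_const,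
            Finset.card_range]
  have hmiss : {ω | ¬∃ i, X i ω ∈ U} = ⋂ i, X i ⁻¹' Uᶜ := by ext; simp
  rw [ae_iff, hmiss]
  exact le_antisymm
    (ge_of_tendsto' (ENNReal.tendsto_pow_atTop_nhds_zero_of_lt_one hlt) hbound) zero_le

theorem ae_dense_range_of_iIndepFun {Ω α : Type*} [MeasurableSpace Ω] [TopologicalSpace α]
    [SecondCountableTopology α] [MeasurableSpace α] [OpensMeasurableSpace α]
    {P : Measure Ω} {μ : Measure α} [IsProbabilityMeasure μ] [μ.IsOpenPosMeasure]
    {X : ℕ → Ω → α} (hmeas : ∀ n, Measurable (X n)) (hindep : iIndepFun X P)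
    (hdist : ∀ n, P.map (X n) = μ) : ∀ᵐ ω ∂P, Dense (Set.range fun i => X i ω) := by
  obtain ⟨b, hb_count, hb_empty, hb⟩ := TopologicalSpace.exists_countable_basis α
  have hhit : ∀ᵐ ω ∂P, ∀ U ∈ b, ∃ i, X i ω ∈ U := by
    refine (ae_ball_iff hb_count).2 fun U hU => ?_
    have hU_open := hb.isOpen hU
    exact ae_exists_mem_of_iIndepFun hmeas hindep hdist hU_open.measurableSet
      (hU_open.measure_ne_zero μ (Set.nonempty_iff_ne_empty.2 (ne_of_mem_of_not_mem hU hb_empty)))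
  filter_upwards [hhit] with ω hω
  refine hb.dense_iff.2 fun U hU _ => ?_
  obtain ⟨i, hi⟩ := hω U hU
  exact ⟨X i ω, hi, i, rfl⟩

section ResidualUnit

variable {d : ℕ}

theorem relu_eq_self {v : Fin d → ℝ} (h : 0 ≤ v) : relu v = v :=
  funext fun i => max_eq_left (h i)

theorem relu_eq_zero {v : Fin d → ℝ} (h : v ≤ 0) : relu v = 0 :=
  funext fun i => max_eq_right (h i)

theorem continuous_relu : Continuous (relu (k := d)) :=
  continuous_pi fun i => (continuous_apply i).max continuous_const

theorem continuous_resUnit (A B : Matrix (Fin d) (Fin d) ℝ) : Continuous (resUnit A B) :=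
  continuous_const.matrix_mulVec
    ((continuous_relu.comp (continuous_const.matrix_mulVec continuous_id)).add continuous_id)

theorem mulVec_resUnit_inv_mulVec_sub {A B : Matrix (Fin d) (Fin d) ℝ} (hA : IsUnit A.det)
    (C : Matrix (Fin d) (Fin d) ℝ) (v : Fin d → ℝ) :
    C *ᵥ resUnit A B (A⁻¹ *ᵥ v) - A⁻¹ *ᵥ v
      = ((C * B - 1) * A⁻¹) *ᵥ (A *ᵥ relu v + v) + relu v := by
  simp only [resUnit, mulVec_mulVec, mul_nonsing_inv A hA, one_mulVec, mulVec_add,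
    Matrix.sub_mul, Matrix.one_mul, Matrix.mul_assoc, nonsing_inv_mul A hA, Matrix.mul_one,
    sub_mulVec]
  abel

theorem eq_inv_of_forall_le_mulVec_resUnit {A B C : Matrix (Fin d) (Fin d) ℝ}
    (hA : ∀ i j, 0 ≤ A i j) (hA_det : IsUnit A.det) (hA_offDiag : ∀ i, ∃ j ≠ i, A i j ≠ 0)
    (hC : ∀ x, x ≤ C *ᵥ resUnit A B x) : C = B⁻¹ := by
  set N := (C * B - 1) * A⁻¹
  have htest (v : Fin d → ℝ) : 0 ≤ N *ᵥ (A *ᵥ relu v + v) + relu v := by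
    rw [← mulVec_resUnit_inv_mulVec_sub hA_det, sub_nonneg]
    exact hC _
  have hN : ∀ i j, N i j ≤ 0 := by
    intro i j
    have := htest (-Pi.single j 1) i
    rw [relu_eq_zero (by simp)] at this
    simpa [mulVec_neg, mulVec_single_one] using this
  have hN_offDiag : ∀ i j, i ≠ j → 0 ≤ (N * A + N) i j := by
    intro i j hij
    have := htest (Pi.single j 1) i
    rw [relu_eq_self (by simp), mulVec_add, mulVec_mulVec, ← add_mulVec] at this
    simpa [mulVec_single_one, hij] using this
  have hN0 : N = 0 := eq_zero_of_nonpos_of_offDiag_mul_add_nonneg hA hA_offDiag hN hN_offDiag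
  have hCB : C * B = 1 := by
    have hNA : N * A = C * B - 1 := by simp [N, Matrix.mul_assoc, nonsing_inv_mul A hA_det]
    rw [← sub_eq_zero, ← hNA, hN0, Matrix.zero_mul]
  exact (inv_eq_left_inv hCB).symm

theorem le_inv_mulVec_resUnit {A B : Matrix (Fin d) (Fin d) ℝ} (hB : IsUnit B.det)
    (x : Fin d → ℝ) : x ≤ B⁻¹ *ᵥ resUnit A B x := by
  rw [resUnit, mulVec_mulVec, nonsing_inv_mul B hB, one_mulVec]
  exact le_add_of_nonneg_left fun i => le_max_right _ 0

theorem tendsto_inv_of_dense_of_le_mulVec_resUnit {A B : Matrix (Fin d) (Fin d) ℝ}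
    (hA : ∀ i j, 0 ≤ A i j) (hA_det : IsUnit A.det) (hB_det : IsUnit B.det)
    (hA_offDiag : ∀ i, ∃ j ≠ i, A i j ≠ 0) {x : ℕ → Fin d → ℝ} (hx : Dense (Set.range x))
    {C : ℕ → Matrix (Fin d) (Fin d) ℝ} (hC : ∀ n, ∀ i < n, x i ≤ C n *ᵥ resUnit A B (x i)) :
    Tendsto C atTop (𝓝 B⁻¹) := by
  -- Any norm inducing the product topology will do; matrices carry no global one.
  let _ := Matrix.normedAddCommGroup (n := Fin d) (m := Fin d) (α := ℝ)
  let _ := Matrix.normedSpace (n := Fin d) (m := Fin d) (α := ℝ) (R := ℝ)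
  have : ProperSpace (Matrix (Fin d) (Fin d) ℝ) := FiniteDimensional.proper_real _
  set S : ℕ → Set (Matrix (Fin d) (Fin d) ℝ) :=
    fun n => ⋂ i < n, {C | x i ≤ C *ᵥ resUnit A B (x i)}
  refine tendsto_of_forall_mem_of_iInter_eq_singleton (S := S) ?_ ?_ ?_ ?_
    fun n => Set.mem_iInter₂.2 (hC n)
  · exact fun m n hmn => Set.biInter_mono (fun i hi => lt_of_lt_of_le hi hmn) fun _ _ => le_rfl
  · exact fun n => convex_iInter₂ fun i _ => convex_setOf_le_mulVec _ _
  · exact fun n => isClosed_biInter fun i _ => isClosed_setOf_le_mulVec _ _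
  refine Set.eq_singleton_iff_unique_mem.2 ⟨Set.mem_iInter.2 fun n => Set.mem_iInter₂.2
    fun i _ => le_inv_mulVec_resUnit hB_det _, fun D hD => ?_⟩
  refine eq_inv_of_forall_le_mulVec_resUnit hA hA_det hA_offDiag fun y => ?_
  refine hx.induction (P := fun y => y ≤ D *ᵥ resUnit A B y) ?_
    (isClosed_le continuous_id (continuous_const.matrix_mulVec (continuous_resUnit A B))) y
  rintro _ ⟨i, rfl⟩
  exact Set.mem_iInter₂.1 (Set.mem_iInter.1 hD (i + 1)) i i.lt_succ_self

end ResidualUnit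

theorem stmt14_general (d : ℕ)
    (Astar Bstar : Matrix (Fin d) (Fin d) ℝ)
    (hAnn : ∀ i j, 0 ≤ Astar i j)
    (hAinv : IsUnit Astar.det) (hBinv : IsUnit Bstar.det)
    (hAns : ∀ j : Fin d, ∃ j', j' ≠ j ∧ Astar j j' ≠ 0)
    (μ : Measure (Fin d → ℝ)) [IsProbabilityMeasure μ]
    (hsupp : ∀ U : Set (Fin d → ℝ), IsOpen U → U.Nonempty → 0 < μ U)
    (Ω : Type) [MeasurableSpace Ω] (P : Measure Ω)
    (X : ℕ → Ω → (Fin d → ℝ)) (hmeas : ∀ n, Measurable (X n))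
    (hindep : iIndepFun X P)
    (hdist : ∀ n, P.map (X n) = μ) :
    let Shat : ℕ → Ω → Set (Matrix (Fin d) (Fin d) ℝ) := fun n ω =>
      {C | ∀ i < n, ∀ j, X i ω j ≤ C.mulVec (resUnit Astar Bstar (X i ω)) j}
    ∀ᵐ ω ∂P, ∀ Cseq : ℕ → Matrix (Fin d) (Fin d) ℝ,
      (∀ n, Cseq n ∈ Shat n ω) →
        Tendsto Cseq atTop (nhds Bstar⁻¹) ∧
          (∀ᶠ n in atTop, IsUnit (Cseq n).det) ∧
          Tendsto (fun n => (Cseq n)⁻¹) atTop (nhds Bstar) := by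
  intro Shat
  have : μ.IsOpenPosMeasure := ⟨fun U hU hne => (hsupp U hU hne).ne'⟩
  filter_upwards [ae_dense_range_of_iIndepFun hmeas hindep hdist] with ω hω Cseq hCseq
  have hlim := tendsto_inv_of_dense_of_le_mulVec_resUnit hAnn hAinv hBinv hAns hω hCseq
  obtain ⟨hdet, hinv⟩ := hlim.matrix_inv (isUnit_nonsing_inv_det Bstar hBinv)
  rw [nonsing_inv_nonsing_inv Bstar hBinv] at hinv
  exact ⟨hlim, hdet, hinv⟩

theorem stmt14 (d : ℕ) (hd : 1 ≤ d)
    (Astar Bstar : Matrix (Fin d) (Fin d) ℝ)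
    (hAnn : ∀ i j, 0 ≤ Astar i j)
    (hAinv : IsUnit Astar.det) (hBinv : IsUnit Bstar.det)
    (hAns : ∀ j : Fin d, ∃ j', j' ≠ j ∧ Astar j j' ≠ 0)
    (μ : Measure (Fin d → ℝ)) [IsProbabilityMeasure μ]
    (hsupp : ∀ U : Set (Fin d → ℝ), IsOpen U → U.Nonempty → 0 < μ U)
    (Ω : Type) [MeasurableSpace Ω] (P : Measure Ω) [IsProbabilityMeasure P]
    (X : ℕ → Ω → (Fin d → ℝ)) (hmeas : ∀ n, Measurable (X n))
    (hindep : iIndepFun X P)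
    (hdist : ∀ n, P.map (X n) = μ) :
    let Shat : ℕ → Ω → Set (Matrix (Fin d) (Fin d) ℝ) := fun n ω =>
      {C | ∀ i < n, ∀ j, X i ω j ≤ C.mulVec (resUnit Astar Bstar (X i ω)) j}
    ∀ᵐ ω ∂P, ∀ Cseq : ℕ → Matrix (Fin d) (Fin d) ℝ,
      (∀ n, Cseq n ∈ Shat n ω) →
        Tendsto Cseq atTop (nhds Bstar⁻¹) ∧
          (∀ᶠ n in atTop, IsUnit (Cseq n).det) ∧
          Tendsto (fun n => (Cseq n)⁻¹) atTop (nhds Bstar) :=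
  stmt14_general d Astar Bstar hAnn hAinv hBinv hAns μ hsupp Ω P X hmeas hindep hdist
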